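/- arXiv:1802.09933 — 2 statements merged into one kernel-verified Lean document; each statement's English description precedes it below -/
import Mathlib

section
/- Let α > 1. Then for every index i ∈ {1,…,n} and all x, y, p ∈ ℝ^d: F(y) ≤ f_i(x) + ⟨p, y − x⟩ + r(y) + (Lα/2)‖y − x‖² + (1/(2L(α−1)))‖∇f(x) − p‖² + f(x) − f_i(x). -/
open scoped RealInnerProductSpace BigOperators

lemma descent_lemma {E : Type*} [NormedAddCommGroup E] [InnerProductSpace ℝ E] [CompleteSpace E]
    (h : E → ℝ) (G : E → E) (hG : ∀ x, HasGradientAt h (G x) x)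
    (L : ℝ) (hL : 0 < L) (hLip : ∀ x y, ‖G x - G y‖ ≤ L * ‖x - y‖)
    (x y : E) : h y ≤ h x + ⟪G x, y - x⟫ + L / 2 * ‖y - x‖ ^ 2 := by
  have hGcont : Continuous G := by
    refine (LipschitzWith.of_dist_le_mul (K := L.toNNReal) ?_).continuous
    intro a b
    simpa [dist_eq_norm, Real.coe_toNNReal _ hL.le] using hLip a b
  set c : ℝ → E := fun t => x + t • (y - x) with hc
  have hderiv : ∀ t : ℝ, HasDerivAt (fun t => h (c t)) ⟪G (c t), y - x⟫ t := by
    intro t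
    have hline : HasDerivAt c (y - x) t := by
      have := ((hasDerivAt_id t).smul_const (y - x)).const_add x
      rw [one_smul] at this
      exact this
    have := ((hG (c t)).hasFDerivAt).comp_hasDerivAt t hline
    exact this
  have hcont : Continuous fun t : ℝ => ⟪G (c t), y - x⟫ := by
    exact (hGcont.comp (by continuity)).inner continuous_const
  have hint : h (c 1) - h (c 0) = ∫ t in (0:ℝ)..1, ⟪G (c t), y - x⟫ := by
    exact (intervalIntegral.integral_eq_sub_of_hasDerivAt
      (fun t _ => hderiv t) (hcont.intervalIntegrable 0 1)).symm
  have hc0 : c 0 = x := by simp [hc]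
  have hc1 : c 1 = y := by simp [hc]
  have hbound : ∀ t ∈ Set.Icc (0:ℝ) 1,
      ⟪G (c t), y - x⟫ ≤ ⟪G x, y - x⟫ + L * t * ‖y - x‖ ^ 2 := by
    intro t ht
    have h1 : ⟪G (c t) - G x, y - x⟫ ≤ ‖G (c t) - G x‖ * ‖y - x‖ :=
      real_inner_le_norm _ _
    have h2 : ‖G (c t) - G x‖ ≤ L * (t * ‖y - x‖) := by
      have := hLip (c t) x
      simpa [hc, norm_smul, abs_of_nonneg ht.1] using this
    have h3 : ⟪G (c t), y - x⟫ = ⟪G x, y - x⟫ + ⟪G (c t) - G x, y - x⟫ := by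
      rw [inner_sub_left]; ring
    have h4 : ‖G (c t) - G x‖ * ‖y - x‖ ≤ L * t * ‖y - x‖ ^ 2 := by
      nlinarith [norm_nonneg (y - x), mul_le_mul_of_nonneg_right h2 (norm_nonneg (y - x))]
    linarith
  have hmono : (∫ t in (0:ℝ)..1, ⟪G (c t), y - x⟫)
      ≤ ∫ t in (0:ℝ)..1, (⟪G x, y - x⟫ + L * t * ‖y - x‖ ^ 2) := by
    refine intervalIntegral.integral_mono_on zero_le_one
      (hcont.intervalIntegrable 0 1) ?_ hbound
    exact (by continuity : Continuous fun t : ℝ => ⟪G x, y - x⟫ + L * t * ‖y - x‖ ^ 2).intervalIntegrable 0 1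
  have hval : (∫ t in (0:ℝ)..1, (⟪G x, y - x⟫ + L * t * ‖y - x‖ ^ 2))
      = ⟪G x, y - x⟫ + L / 2 * ‖y - x‖ ^ 2 := by
    rw [intervalIntegral.integral_add (continuous_const.intervalIntegrable 0 1)
      ((by continuity : Continuous fun t : ℝ => L * t * ‖y - x‖ ^ 2).intervalIntegrable 0 1)]
    have h5 : (∫ t in (0:ℝ)..1, L * t * ‖y - x‖ ^ 2)
        = L * ‖y - x‖ ^ 2 * ∫ t in (0:ℝ)..1, t := by
      rw [← intervalIntegral.integral_const_mul]
      congr 1; ext t; ring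
    rw [h5, integral_id]
    simp
    ring
  rw [hc0, hc1] at hint
  linarith [hmono, hint, hval ▸ hmono]

/-- Inequalities (71)–(72) in the proof of Theorem 1: for `α > 1`, any `i` and
`x, y, p`:
`F(y) ≤ fᵢ(x) + ⟨p, y - x⟩ + r(y) + (Lα/2)‖y - x‖²
  + (1/(2L(α-1)))‖∇f(x) - p‖² + f(x) - fᵢ(x)`. -/
theorem per_iteration_smoothness_bound {d n : ℕ} (hn : 0 < n) (L : ℝ) (hL : 0 < L)
    (f : Fin n → EuclideanSpace ℝ (Fin d) → ℝ)
    (g : Fin n → EuclideanSpace ℝ (Fin d) → EuclideanSpace ℝ (Fin d))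
    (hconv : ∀ i, ConvexOn ℝ Set.univ (f i))
    (hgrad : ∀ i x, HasGradientAt (f i) (g i x) x)
    (hLip : ∀ i x y, ‖g i x - g i y‖ ≤ L * ‖x - y‖)
    (r : EuclideanSpace ℝ (Fin d) → ℝ) (hr : ConvexOn ℝ Set.univ r)
    (fb : EuclideanSpace ℝ (Fin d) → ℝ)
    (hfb : ∀ x, fb x = (n : ℝ)⁻¹ * ∑ i, f i x)
    (F : EuclideanSpace ℝ (Fin d) → ℝ) (hF : ∀ x, F x = fb x + r x)
    (gf : EuclideanSpace ℝ (Fin d) → EuclideanSpace ℝ (Fin d))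
    (hgf : ∀ x, gf x = (n : ℝ)⁻¹ • ∑ i, g i x)
    (α : ℝ) (hα : 1 < α) (i : Fin n)
    (x y p : EuclideanSpace ℝ (Fin d)) :
    F y ≤ f i x + ⟪p, y - x⟫ + r y + L * α / 2 * ‖y - x‖ ^ 2 +
      1 / (2 * L * (α - 1)) * ‖gf x - p‖ ^ 2 + fb x - f i x := by
  have hdesc : ∀ j, f j y ≤ f j x + ⟪g j x, y - x⟫ + L / 2 * ‖y - x‖ ^ 2 := fun j =>
    descent_lemma (f j) (g j) (hgrad j) L hL (hLip j) x y
  -- average descent lemma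
  have hinner : ⟪gf x, y - x⟫ = (n : ℝ)⁻¹ * ∑ j, ⟪g j x, y - x⟫ := by
    rw [hgf, real_inner_smul_left, sum_inner]
  have hfbdesc : fb y ≤ fb x + ⟪gf x, y - x⟫ + L / 2 * ‖y - x‖ ^ 2 := by
    rw [hfb, hfb, hinner]
    have hsum : ∑ j, f j y ≤ ∑ j, (f j x + ⟪g j x, y - x⟫ + L / 2 * ‖y - x‖ ^ 2) :=
      Finset.sum_le_sum fun j _ => hdesc j
    rw [Finset.sum_add_distrib, Finset.sum_add_distrib, Finset.sum_const,
      Finset.card_univ, Fintype.card_fin, nsmul_eq_mul] at hsum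
    have hn' : (0:ℝ) < (n:ℝ)⁻¹ := by positivity
    have := mul_le_mul_of_nonneg_left hsum hn'.le
    have hnn : (n:ℝ)⁻¹ * ((n:ℝ) * (L / 2 * ‖y - x‖ ^ 2)) = L / 2 * ‖y - x‖ ^ 2 := by
      field_simp
    nlinarith [this]
  -- Young's inequality
  have hyoung : ⟪gf x - p, y - x⟫ ≤
      1 / (2 * L * (α - 1)) * ‖gf x - p‖ ^ 2 + L * (α - 1) / 2 * ‖y - x‖ ^ 2 := by
    have h1 : ⟪gf x - p, y - x⟫ ≤ ‖gf x - p‖ * ‖y - x‖ := real_inner_le_norm _ _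
    have hc : (0:ℝ) < L * (α - 1) := by nlinarith
    have h2 : (0:ℝ) ≤ (‖gf x - p‖ - L * (α - 1) * ‖y - x‖) ^ 2 := sq_nonneg _
    have h3 : ‖gf x - p‖ * ‖y - x‖ ≤
        (‖gf x - p‖ ^ 2 + (L * (α - 1)) ^ 2 * ‖y - x‖ ^ 2) / (2 * (L * (α - 1))) := by
      rw [le_div_iff₀ (by positivity)]
      nlinarith
    have h4 : (‖gf x - p‖ ^ 2 + (L * (α - 1)) ^ 2 * ‖y - x‖ ^ 2) / (2 * (L * (α - 1)))
        = 1 / (2 * L * (α - 1)) * ‖gf x - p‖ ^ 2 + L * (α - 1) / 2 * ‖y - x‖ ^ 2 := by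
      have h2L : 2 * L * (α - 1) = 2 * (L * (α - 1)) := by ring
      rw [h2L]
      field_simp [hc.ne']
    linarith [h4 ▸ h3]
  have hsplit : ⟪gf x, y - x⟫ = ⟪p, y - x⟫ + ⟪gf x - p, y - x⟫ := by
    rw [inner_sub_left]; ring
  rw [hF]
  nlinarith [hfbdesc, hyoung, hsplit, norm_nonneg (y - x), sq_nonneg (‖y - x‖)]
end

section
/- Let α > 1, σ ∈ (0, 1], and η = 1/(Lα). Fix an index i ∈ {1,…,n} and points x, x̃, u, v ∈ ℝ^d. Define p = ∇f_i(x) − ∇f_i(x̃) + ∇f(x̃), y = prox_η^r(x − η·p), ŵ = σ·u + (1−σ)·v, z₀ = (x − (1−σ)·v)/σ, and z₁ = (y − (1−σ)·v)/σ. Then: F(y) ≤ σ·F_i(u) + (1−σ)·F_i(v) + (Lασ²/2)·(‖u − z₀‖² − ‖u − z₁‖²) + (1/(2L(α−1)))·‖∇f(x) − p‖² + f(x) − f_i(x) + ⟨∇f(x̃) − ∇f_i(x̃), ŵ − x⟩. -/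
open scoped RealInnerProductSpace BigOperators

section Aux

variable {E : Type*} [NormedAddCommGroup E] [InnerProductSpace ℝ E] [CompleteSpace E]

lemma small_t_lemma {a b c : ℝ} (h : ∀ t ∈ Set.Ioo (0:ℝ) 1, a ≤ b + t * c) : a ≤ b := by
  by_contra hab
  push_neg at hab
  rcases le_or_gt c 0 with hc | hc
  · have := h (1/2) ⟨by norm_num, by norm_num⟩
    nlinarith
  · set t := min ((a - b) / (2 * c)) (1/2) with ht
    have ht0 : 0 < t := lt_min (div_pos (by linarith) (by linarith)) (by norm_num)
    have ht1 : t < 1 := lt_of_le_of_lt (min_le_right _ _) (by norm_num)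
    have h2 := h t ⟨ht0, ht1⟩
    have htle : t ≤ (a - b) / (2 * c) := min_le_left _ _
    have h3 : t * c ≤ (a - b) / 2 := by
      rw [le_div_iff₀ (by linarith : (0:ℝ) < 2 * c)] at htle
      nlinarith
    nlinarith

lemma hasDerivAt_line {f : E → ℝ} {gz x dv : E} {t₀ : ℝ}
    (hf : HasGradientAt f gz (x + t₀ • dv)) :
    HasDerivAt (fun t : ℝ => f (x + t • dv)) ⟪gz, dv⟫ t₀ := by
  have hc : HasDerivAt (fun t : ℝ => x + t • dv) dv t₀ := by
    simpa using ((hasDerivAt_id t₀).smul_const dv).const_add x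
  have hf' := hasGradientAt_iff_hasFDerivAt.mp hf
  have := hf'.comp_hasDerivAt t₀ hc
  exact this

lemma convex_grad_le {f : E → ℝ} (hc : ConvexOn ℝ Set.univ f) {gx : E} {x : E}
    (h : HasGradientAt f gx x) (w : E) : f x + ⟪gx, w - x⟫ ≤ f w := by
  have hd : HasDerivAt (fun t : ℝ => f (x + t • (w - x))) ⟪gx, w - x⟫ 0 := by
    apply hasDerivAt_line; simpa using h
  have hslope := hasDerivAt_iff_tendsto_slope.mp hd
  have hmono : (nhdsWithin (0:ℝ) (Set.Ioi 0)) ≤ nhdsWithin 0 {(0:ℝ)}ᶜ :=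
    nhdsWithin_mono 0 (fun t ht => ne_of_gt ht)
  have key : ⟪gx, w - x⟫ ≤ f w - f x := by
    refine le_of_tendsto (hslope.mono_left hmono) ?_
    filter_upwards [Ioo_mem_nhdsGT_of_mem (Set.left_mem_Ico.2 one_pos)] with t ht
    have h1 : f (x + t • (w - x)) ≤ (1 - t) * f x + t * f w := by
      have h2 := hc.2 (Set.mem_univ x) (Set.mem_univ w)
        (by linarith [ht.2] : (0:ℝ) ≤ 1 - t) (le_of_lt ht.1) (by ring)
      calc f (x + t • (w - x)) = f ((1-t) • x + t • w) := by congr 1; module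
        _ ≤ (1-t) * f x + t * f w := by simpa using h2
    have ht0 : (0:ℝ) < t := ht.1
    have hs : slope (fun t : ℝ => f (x + t • (w - x))) 0 t
        = (f (x + t • (w - x)) - f x) / t := by
      simp [slope_def_field]
    rw [hs, div_le_iff₀ ht0]
    nlinarith
  linarith

lemma descent_lemma_s8 {f : E → ℝ} {g : E → E} {L : ℝ}
    (hg : ∀ z, HasGradientAt f (g z) z)
    (hlip : ∀ a b, ‖g a - g b‖ ≤ L * ‖a - b‖) (x y : E) :
    f y ≤ f x + ⟪g x, y - x⟫ + L / 2 * ‖y - x‖ ^ 2 := by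
  set dv := y - x with hdv
  set h : ℝ → ℝ := fun t => f (x + t • dv) - t * ⟪g x, dv⟫ - L * t ^ 2 / 2 * ‖dv‖ ^ 2 with hh
  have hder : ∀ t : ℝ, HasDerivAt h
      (⟪g (x + t • dv), dv⟫ - ⟪g x, dv⟫ - L * t * ‖dv‖ ^ 2) t := by
    intro t
    have h1 : HasDerivAt (fun t : ℝ => f (x + t • dv)) ⟪g (x + t • dv), dv⟫ t :=
      hasDerivAt_line (hg _)
    have h2 : HasDerivAt (fun t : ℝ => t * ⟪g x, dv⟫) ⟪g x, dv⟫ t := by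
      simpa using (hasDerivAt_id t).mul_const ⟪g x, dv⟫
    have h3 : HasDerivAt (fun t : ℝ => L * t ^ 2 / 2 * ‖dv‖ ^ 2) (L * t * ‖dv‖ ^ 2) t := by
      have := (((hasDerivAt_pow 2 t).const_mul L).div_const 2).mul_const (‖dv‖ ^ 2)
      exact this.congr_deriv (by rw [show (2:ℕ) - 1 = 1 from rfl]; push_cast; ring)
    exact (h1.sub h2).sub h3
  have hanti : AntitoneOn h (Set.Icc 0 1) := by
    apply antitoneOn_of_deriv_nonpos (convex_Icc 0 1)
    · exact fun t _ => (hder t).continuousAt.continuousWithinAt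
    · exact fun t _ => (hder t).differentiableAt.differentiableWithinAt
    · intro t ht
      rw [interior_Icc] at ht
      rw [(hder t).deriv]
      have hkey : ⟪g (x + t • dv) - g x, dv⟫ ≤ L * t * ‖dv‖ ^ 2 := by
        calc ⟪g (x + t • dv) - g x, dv⟫ ≤ ‖g (x + t • dv) - g x‖ * ‖dv‖ :=
              real_inner_le_norm _ _
          _ ≤ (L * ‖(x + t • dv) - x‖) * ‖dv‖ :=
              mul_le_mul_of_nonneg_right (hlip _ _) (norm_nonneg _)
          _ = L * t * ‖dv‖ ^ 2 := by
              have : (x + t • dv) - x = t • dv := by abel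
              rw [this, norm_smul, Real.norm_eq_abs, abs_of_nonneg ht.1.le]
              ring
      have hsub : ⟪g (x + t • dv) - g x, dv⟫ = ⟪g (x + t • dv), dv⟫ - ⟪g x, dv⟫ :=
        inner_sub_left _ _ _
      linarith
  have hfin := hanti (Set.left_mem_Icc.2 zero_le_one) (Set.right_mem_Icc.2 zero_le_one)
    zero_le_one
  have e0 : h 0 = f x := by simp [hh]
  have e1 : h 1 = f y - ⟪g x, dv⟫ - L / 2 * ‖dv‖ ^ 2 := by
    have hxy : x + dv = y := by rw [hdv]; abel
    simp [hh, hxy]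
  rw [e0, e1] at hfin
  linarith

lemma young_ineq {β : ℝ} (hβ : 0 < β) (a b : E) :
    ⟪a, b⟫ ≤ 1/(2*β) * ‖a‖^2 + β/2 * ‖b‖^2 := by
  have h1 := real_inner_le_norm a b
  have key : 1/(2*β) * (‖a‖ - β*‖b‖)^2
      = 1/(2*β) * ‖a‖^2 + β/2 * ‖b‖^2 - ‖a‖ * ‖b‖ := by
    field_simp
    ring
  have h2 : 0 ≤ 1/(2*β) * (‖a‖ - β*‖b‖)^2 := by positivity
  linarith

end Aux

/-- Inequality (73), the full deterministic per-iteration bound in the proof of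
Theorem 1. -/
theorem per_iteration_bound {d n : ℕ} (hn : 0 < n) (L : ℝ) (hL : 0 < L)
    (f : Fin n → EuclideanSpace ℝ (Fin d) → ℝ)
    (g : Fin n → EuclideanSpace ℝ (Fin d) → EuclideanSpace ℝ (Fin d))
    (hconv : ∀ i, ConvexOn ℝ Set.univ (f i))
    (hgrad : ∀ i x, HasGradientAt (f i) (g i x) x)
    (hLip : ∀ i x y, ‖g i x - g i y‖ ≤ L * ‖x - y‖)
    (r : EuclideanSpace ℝ (Fin d) → ℝ) (hr : ConvexOn ℝ Set.univ r)
    (fb : EuclideanSpace ℝ (Fin d) → ℝ)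
    (hfb : ∀ x, fb x = (n : ℝ)⁻¹ * ∑ i, f i x)
    (F : EuclideanSpace ℝ (Fin d) → ℝ) (hF : ∀ x, F x = fb x + r x)
    (gf : EuclideanSpace ℝ (Fin d) → EuclideanSpace ℝ (Fin d))
    (hgf : ∀ x, gf x = (n : ℝ)⁻¹ • ∑ i, g i x)
    (α σ η : ℝ) (hα : 1 < α) (hσ0 : 0 < σ) (hσ1 : σ ≤ 1)
    (hη : η = 1 / (L * α)) (i : Fin n)
    (x xt u v : EuclideanSpace ℝ (Fin d))
    (p : EuclideanSpace ℝ (Fin d)) (hp : p = g i x - g i xt + gf xt)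
    (y : EuclideanSpace ℝ (Fin d))
    (hy : ∀ w, 1 / (2 * η) * ‖y - (x - η • p)‖ ^ 2 + r y ≤
      1 / (2 * η) * ‖w - (x - η • p)‖ ^ 2 + r w)
    (what z₀ z₁ : EuclideanSpace ℝ (Fin d))
    (hwhat : what = σ • u + (1 - σ) • v)
    (hz₀ : z₀ = σ⁻¹ • (x - (1 - σ) • v))
    (hz₁ : z₁ = σ⁻¹ • (y - (1 - σ) • v)) :
    F y ≤ σ * (f i u + r u) + (1 - σ) * (f i v + r v) +
      L * α * σ ^ 2 / 2 * (‖u - z₀‖ ^ 2 - ‖u - z₁‖ ^ 2) +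
      1 / (2 * L * (α - 1)) * ‖gf x - p‖ ^ 2 + fb x - f i x +
      ⟪gf xt - g i xt, what - x⟫ := by
  have hα0 : (0:ℝ) < α := lt_trans one_pos hα
  have hLα : 0 < L * α := mul_pos hL hα0
  have hη0 : 0 < η := by rw [hη]; positivity
  have hηval : 1 / (2 * η) = L * α / 2 := by rw [hη]; field_simp
  -- gradient of fb
  have hgradfb : ∀ z, HasGradientAt fb (gf z) z := by
    intro z
    have hfb' : fb = fun w => (n : ℝ)⁻¹ * ∑ i, f i w := funext hfb
    rw [hfb', hasGradientAt_iff_hasFDerivAt]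
    have hsum : HasFDerivAt (fun w => ∑ i, f i w)
        (∑ i, (InnerProductSpace.toDual ℝ _ (g i z))) z :=
      HasFDerivAt.fun_sum (fun i _ => hasGradientAt_iff_hasFDerivAt.mp (hgrad i z))
    have h2 := hsum.const_mul (n : ℝ)⁻¹
    convert h2 using 1
    rfl
    rw [hgf]
    simp
  -- Lipschitz of gf
  have hlipf : ∀ a b, ‖gf a - gf b‖ ≤ L * ‖a - b‖ := by
    intro a b
    rw [hgf, hgf, ← smul_sub, ← Finset.sum_sub_distrib, norm_smul, Real.norm_eq_abs,
      abs_of_nonneg (by positivity : (0:ℝ) ≤ (n:ℝ)⁻¹)]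
    have h1 : ‖∑ j, (g j a - g j b)‖ ≤ ∑ j : Fin n, L * ‖a - b‖ :=
      le_trans (norm_sum_le _ _) (Finset.sum_le_sum (fun j _ => hLip j a b))
    rw [Finset.sum_const, Finset.card_univ, Fintype.card_fin, nsmul_eq_mul] at h1
    have hn' : (0:ℝ) < (n:ℝ) := by exact_mod_cast hn
    calc (n:ℝ)⁻¹ * ‖∑ j, (g j a - g j b)‖ ≤ (n:ℝ)⁻¹ * ((n:ℝ) * (L * ‖a - b‖)) := by
          apply mul_le_mul_of_nonneg_left h1 (by positivity)
      _ = L * ‖a - b‖ := by field_simp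
  set cc := x - η • p with hcc
  -- prox variational inequality at point `what`
  have hVI : r y ≤ r what + (1/η) * ⟪y - cc, what - y⟫ := by
    apply small_t_lemma (c := ‖what - y‖ ^ 2 / (2 * η))
    intro t ht
    have hyt := hy (y + t • (what - y))
    have hcv := hr.2 (Set.mem_univ y) (Set.mem_univ what)
      (by linarith [ht.2] : (0:ℝ) ≤ 1 - t) ht.1.le (by ring)
    have hrc : r (y + t • (what - y)) ≤ (1-t) * r y + t * r what := by
      have heq : y + t • (what - y) = (1 - t) • y + t • what := by module
      rw [heq]; simpa using hcv
    have hnorm : ‖y + t • (what - y) - cc‖ ^ 2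
        = ‖y - cc‖ ^ 2 + 2 * t * ⟪y - cc, what - y⟫ + t ^ 2 * ‖what - y‖ ^ 2 := by
      have h1 : y + t • (what - y) - cc = (y - cc) + t • (what - y) := by module
      rw [h1, norm_add_sq_real, real_inner_smul_right, norm_smul, Real.norm_eq_abs,
        mul_pow, sq_abs]
      ring
    rw [hnorm] at hyt
    have hmul : t * (r y) ≤ t * (r what + (1/η) * ⟪y - cc, what - y⟫
        + t * (‖what - y‖ ^ 2 / (2 * η))) := by
      have hηinv : 1 / η = 2 * (1 / (2 * η)) := by
        field_simp
      rw [hηinv]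
      have hdiv : ‖what - y‖ ^ 2 / (2 * η) = 1 / (2 * η) * ‖what - y‖ ^ 2 := by
        ring
      rw [hdiv, hηval] at *
      linarith [hyt, hrc]
    have := le_of_mul_le_mul_left hmul ht.1
    linarith
  -- three-point identity
  have hid1 : (1/η) * ⟪y - cc, what - y⟫
      = 1/(2*η) * (‖what - cc‖^2 - ‖y - cc‖^2 - ‖what - y‖^2) := by
    have hAB : what - y = (what - cc) - (y - cc) := by abel
    have h3 := norm_sub_sq_real (what - cc) (y - cc)
    have h4 : ⟪y - cc, (what - cc) - (y - cc)⟫ = ⟪what - cc, y - cc⟫ - ‖y - cc‖^2 := by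
      rw [inner_sub_right, real_inner_self_eq_norm_sq, real_inner_comm]
    rw [hAB, h4, h3]
    have hη' : η ≠ 0 := hη0.ne'
    field_simp
    ring
  -- expansions
  have hE1 : ‖what - cc‖^2 = ‖what - x‖^2 + 2*η*⟪what - x, p⟫ + η^2*‖p‖^2 := by
    have h1 : what - cc = (what - x) + η • p := by rw [hcc]; module
    rw [h1, norm_add_sq_real, real_inner_smul_right, norm_smul, Real.norm_eq_abs,
      mul_pow, sq_abs]
    ring
  have hE2 : ‖y - cc‖^2 = ‖y - x‖^2 + 2*η*⟪y - x, p⟫ + η^2*‖p‖^2 := by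
    have h1 : y - cc = (y - x) + η • p := by rw [hcc]; module
    rw [h1, norm_add_sq_real, real_inner_smul_right, norm_smul, Real.norm_eq_abs,
      mul_pow, sq_abs]
    ring
  -- norm identities with z₀, z₁
  have hz0 : ‖what - x‖^2 = σ^2 * ‖u - z₀‖^2 := by
    have h1 : what - x = σ • (u - z₀) := by
      rw [hwhat, hz₀, smul_sub, smul_inv_smul₀ hσ0.ne']
      module
    rw [h1, norm_smul, Real.norm_eq_abs, mul_pow, sq_abs]
  have hz1 : ‖what - y‖^2 = σ^2 * ‖u - z₁‖^2 := by
    have h1 : what - y = σ • (u - z₁) := by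
      rw [hwhat, hz₁, smul_sub, smul_inv_smul₀ hσ0.ne']
      module
    rw [h1, norm_smul, Real.norm_eq_abs, mul_pow, sq_abs]
  -- consolidated prox bound
  have hkey : r y ≤ r what + L*α/2 * (σ^2 * ‖u - z₀‖^2 - ‖y - x‖^2 - σ^2 * ‖u - z₁‖^2)
      + ⟪what - x, p⟫ - ⟪y - x, p⟫ := by
    rw [hid1] at hVI
    calc r y ≤ r what + 1/(2*η) * (‖what - cc‖^2 - ‖y - cc‖^2 - ‖what - y‖^2) := hVI
      _ = r what + L*α/2 * (σ^2 * ‖u - z₀‖^2 - ‖y - x‖^2 - σ^2 * ‖u - z₁‖^2)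
          + ⟪what - x, p⟫ - ⟪y - x, p⟫ := by
        rw [hE1, hE2, hz0, hz1, hηval]
        have hcancel : L * α * η = 1 := by
          rw [hη]; field_simp
        linear_combination (⟪what - x, p⟫ - ⟪y - x, p⟫ : ℝ) * hcancel
  -- descent lemma for fb
  have hdesc := descent_lemma_s8 hgradfb hlipf x y
  -- Young's inequality
  have hβ : (0:ℝ) < L * (α - 1) := mul_pos hL (by linarith)
  have hyoung : ⟪gf x - p, y - x⟫ ≤ 1 / (2 * L * (α - 1)) * ‖gf x - p‖^2
      + (L*(α-1))/2 * ‖y - x‖^2 := by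
    have h0 := young_ineq hβ (gf x - p) (y - x)
    have heq : 1/(2*(L*(α-1))) = 1 / (2 * L * (α - 1)) := by ring
    rw [heq] at h0
    exact h0
  -- convexity inequalities
  have hfi1 : f i x + ⟪g i x, what - x⟫ ≤ f i what :=
    convex_grad_le (hconv i) (hgrad i x) what
  have hfi2 : f i what ≤ σ * f i u + (1-σ) * f i v := by
    have h2 := (hconv i).2 (Set.mem_univ u) (Set.mem_univ v) hσ0.le
      (by linarith : (0:ℝ) ≤ 1 - σ) (by ring)
    rw [hwhat]; simpa using h2
  have hrw : r what ≤ σ * r u + (1-σ) * r v := by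
    have h2 := hr.2 (Set.mem_univ u) (Set.mem_univ v) hσ0.le
      (by linarith : (0:ℝ) ≤ 1 - σ) (by ring)
    rw [hwhat]; simpa using h2
  -- inner product decompositions
  have hip1 : ⟪gf x, y - x⟫ = ⟪gf x - p, y - x⟫ + ⟪p, y - x⟫ := by
    rw [inner_sub_left]; ring
  have hip2 : ⟪what - x, p⟫ = ⟪g i x, what - x⟫ + ⟪gf xt - g i xt, what - x⟫ := by
    have hc : (⟪what - x, p⟫ : ℝ) = ⟪p, what - x⟫ := real_inner_comm _ _
    rw [hc, hp, inner_add_left, inner_sub_left, inner_sub_left]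
    ring
  have hcm1 : ⟪p, y - x⟫ = ⟪y - x, p⟫ := real_inner_comm _ _
  rw [hF]
  linarith [hdesc, hkey, hyoung, hfi1, hfi2, hrw, hip1, hip2, hcm1]
end
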